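/- Let u : ℝ² → ℝ be smooth with variables x, y. Define φ = u_xxx + (1/2)u_x³, M = (1/2)φ·u_x − (1/8)u_x⁴ + (1/2)u_xx², N = (1/2)φ·u_y − (1/2)u_x²·cos u − u_xx·(u_xy − sin u), and L = (1/2)u_x·u_y − cos u. Then, as an identity for all smooth u (no equation assumed), D_y M + D_x N = (1/2)(φ_y u_x + φ_x u_y) + φ·sin u + (φ − (1/2)u_x³ − u_xxx)·(u_xy − sin u), where φ_x, φ_y are the total x- and y-derivatives of φ[u]. -/

import Mathlib

open scoped ContDiff

/-- Total derivative with respect to the first variable `x`. -/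
noncomputable def Dx (f : ℝ → ℝ → ℝ) : ℝ → ℝ → ℝ := fun x y => deriv (fun s => f s y) x

/-- Total derivative with respect to the second variable `y`. -/
noncomputable def Dy (f : ℝ → ℝ → ℝ) : ℝ → ℝ → ℝ := fun x y => deriv (fun t => f x t) y

private lemma hasDerivAt_Dx {f : ℝ → ℝ → ℝ}
    (hf : ContDiff ℝ ∞ fun p : ℝ × ℝ => f p.1 p.2) (x y : ℝ) :
    HasDerivAt (fun s => f s y) (Dx f x y) x := by
  have hline : HasDerivAt (fun s : ℝ => ((s, y) : ℝ × ℝ)) (1, 0) x :=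
    (hasDerivAt_id x).prodMk (hasDerivAt_const x y)
  have h1 : HasDerivAt (fun s => f s y)
      (fderiv ℝ (fun p : ℝ × ℝ => f p.1 p.2) (x, y) (1, 0)) x :=
    by have := ((hf.differentiable (by simp) (x, y)).hasFDerivAt).comp_hasDerivAt x hline; exact this
  have h2 : Dx f x y = fderiv ℝ (fun p : ℝ × ℝ => f p.1 p.2) (x, y) (1, 0) := h1.deriv
  rw [h2]; exact h1

private lemma hasDerivAt_Dy {f : ℝ → ℝ → ℝ}
    (hf : ContDiff ℝ ∞ fun p : ℝ × ℝ => f p.1 p.2) (x y : ℝ) :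
    HasDerivAt (fun t => f x t) (Dy f x y) y := by
  have hline : HasDerivAt (fun t : ℝ => ((x, t) : ℝ × ℝ)) (0, 1) y :=
    (hasDerivAt_const y x).prodMk (hasDerivAt_id y)
  have h1 : HasDerivAt (fun t => f x t)
      (fderiv ℝ (fun p : ℝ × ℝ => f p.1 p.2) (x, y) (0, 1)) y :=
    ((hf.differentiable (by simp) (x, y)).hasFDerivAt).comp_hasDerivAt y hline
  have h2 : Dy f x y = fderiv ℝ (fun p : ℝ × ℝ => f p.1 p.2) (x, y) (0, 1) := h1.deriv
  rw [h2]; exact h1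

private lemma Dx_eq_fderiv {f : ℝ → ℝ → ℝ}
    (hf : ContDiff ℝ ∞ fun p : ℝ × ℝ => f p.1 p.2) (x y : ℝ) :
    Dx f x y = fderiv ℝ (fun p : ℝ × ℝ => f p.1 p.2) (x, y) (1, 0) := by
  have hline : HasDerivAt (fun s : ℝ => ((s, y) : ℝ × ℝ)) (1, 0) x :=
    (hasDerivAt_id x).prodMk (hasDerivAt_const x y)
  exact (((hf.differentiable (by simp) (x, y)).hasFDerivAt).comp_hasDerivAt x hline).deriv

private lemma Dy_eq_fderiv {f : ℝ → ℝ → ℝ}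
    (hf : ContDiff ℝ ∞ fun p : ℝ × ℝ => f p.1 p.2) (x y : ℝ) :
    Dy f x y = fderiv ℝ (fun p : ℝ × ℝ => f p.1 p.2) (x, y) (0, 1) := by
  have hline : HasDerivAt (fun t : ℝ => ((x, t) : ℝ × ℝ)) (0, 1) y :=
    (hasDerivAt_const y x).prodMk (hasDerivAt_id y)
  exact (((hf.differentiable (by simp) (x, y)).hasFDerivAt).comp_hasDerivAt y hline).deriv

private lemma contDiff_Dx {f : ℝ → ℝ → ℝ}
    (hf : ContDiff ℝ ∞ fun p : ℝ × ℝ => f p.1 p.2) :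
    ContDiff ℝ ∞ fun p : ℝ × ℝ => Dx f p.1 p.2 := by
  have hfd := (contDiff_infty_iff_fderiv.mp hf).2
  have heq : (fun p : ℝ × ℝ => Dx f p.1 p.2)
      = fun p : ℝ × ℝ =>
        (ContinuousLinearMap.apply ℝ ℝ (((1 : ℝ), (0 : ℝ)) : ℝ × ℝ))
          (fderiv ℝ (fun q : ℝ × ℝ => f q.1 q.2) p) := by
    funext p
    simpa using Dx_eq_fderiv hf p.1 p.2
  rw [heq]
  exact (ContinuousLinearMap.apply ℝ ℝ (((1 : ℝ), (0 : ℝ)) : ℝ × ℝ)).contDiff.comp hfd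

private lemma contDiff_Dy {f : ℝ → ℝ → ℝ}
    (hf : ContDiff ℝ ∞ fun p : ℝ × ℝ => f p.1 p.2) :
    ContDiff ℝ ∞ fun p : ℝ × ℝ => Dy f p.1 p.2 := by
  have hfd := (contDiff_infty_iff_fderiv.mp hf).2
  have heq : (fun p : ℝ × ℝ => Dy f p.1 p.2)
      = fun p : ℝ × ℝ =>
        (ContinuousLinearMap.apply ℝ ℝ (((0 : ℝ), (1 : ℝ)) : ℝ × ℝ))
          (fderiv ℝ (fun q : ℝ × ℝ => f q.1 q.2) p) := by
    funext p
    simpa using Dy_eq_fderiv hf p.1 p.2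
  rw [heq]
  exact (ContinuousLinearMap.apply ℝ ℝ (((0 : ℝ), (1 : ℝ)) : ℝ × ℝ)).contDiff.comp hfd

/-- Clairaut: mixed partials commute for smooth functions. -/
private lemma Dy_Dx_comm {f : ℝ → ℝ → ℝ}
    (hf : ContDiff ℝ ∞ fun p : ℝ × ℝ => f p.1 p.2) (x y : ℝ) :
    Dy (Dx f) x y = Dx (Dy f) x y := by
  set F := fun p : ℝ × ℝ => f p.1 p.2 with hF
  have hfd := (contDiff_infty_iff_fderiv.mp hf).2
  have hdf : DifferentiableAt ℝ (fderiv ℝ F) (x, y) :=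
    hfd.differentiable (by simp) (x, y)
  have hsym : IsSymmSndFDerivAt ℝ F (x, y) :=
    hf.contDiffAt.isSymmSndFDerivAt (by simp; exact WithTop.coe_le_coe.mpr le_top)
  have key : ∀ v w : ℝ × ℝ,
      fderiv ℝ (fun p : ℝ × ℝ =>
        (ContinuousLinearMap.apply ℝ ℝ v) (fderiv ℝ F p)) (x, y) w
      = fderiv ℝ (fderiv ℝ F) (x, y) w v := by
    intro v w
    have hc : HasFDerivAt (fun p : ℝ × ℝ =>
        (ContinuousLinearMap.apply ℝ ℝ v) (fderiv ℝ F p))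
        ((ContinuousLinearMap.apply ℝ ℝ v).comp
          (fderiv ℝ (fderiv ℝ F) (x, y))) (x, y) :=
      ((ContinuousLinearMap.apply ℝ ℝ v).hasFDerivAt).comp (x, y) hdf.hasFDerivAt
    rw [hc.fderiv]
    rfl
  have h1 : Dy (Dx f) x y = fderiv ℝ (fderiv ℝ F) (x, y) (0, 1) (1, 0) := by
    rw [Dy_eq_fderiv (contDiff_Dx hf) x y]
    have heq : (fun p : ℝ × ℝ => Dx f p.1 p.2)
        = fun p : ℝ × ℝ =>
          (ContinuousLinearMap.apply ℝ ℝ (((1 : ℝ), (0 : ℝ)) : ℝ × ℝ)) (fderiv ℝ F p) := by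
      funext p; simpa using Dx_eq_fderiv hf p.1 p.2
    rw [heq, key]
  have h2 : Dx (Dy f) x y = fderiv ℝ (fderiv ℝ F) (x, y) (1, 0) (0, 1) := by
    rw [Dx_eq_fderiv (contDiff_Dy hf) x y]
    have heq : (fun p : ℝ × ℝ => Dy f p.1 p.2)
        = fun p : ℝ × ℝ =>
          (ContinuousLinearMap.apply ℝ ℝ (((0 : ℝ), (1 : ℝ)) : ℝ × ℝ)) (fderiv ℝ F p) := by
      funext p; simpa using Dy_eq_fderiv hf p.1 p.2
    rw [heq, key]
  rw [h1, h2, hsym (0, 1) (1, 0)]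

/-- The algebraic divergence identity (equation (9) of the paper), valid for all smooth `u`:
`D_y M + D_x N = (1/2)(φ_y u_x + φ_x u_y) + φ sin u + (φ - (1/2)u_x³ - u_xxx)(u_xy - sin u)`. -/
theorem stmt_1 (u : ℝ → ℝ → ℝ)
    (hu : ContDiff ℝ (⊤ : ℕ∞) fun p : ℝ × ℝ => u p.1 p.2)
    (L φ M N : ℝ → ℝ → ℝ)
    (hL : ∀ x y, L x y = (1/2) * Dx u x y * Dy u x y - Real.cos (u x y))
    (hφ : ∀ x y, φ x y = Dx (Dx (Dx u)) x y + (1/2) * (Dx u x y)^3)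
    (hM : ∀ x y, M x y = (1/2) * φ x y * Dx u x y - (1/8) * (Dx u x y)^4
          + (1/2) * (Dx (Dx u) x y)^2)
    (hN : ∀ x y, N x y = (1/2) * φ x y * Dy u x y
          - (1/2) * (Dx u x y)^2 * Real.cos (u x y)
          - Dx (Dx u) x y * (Dy (Dx u) x y - Real.sin (u x y))) :
    ∀ x y, Dy M x y + Dx N x y
      = (1/2) * (Dy φ x y * Dx u x y + Dx φ x y * Dy u x y)
        + φ x y * Real.sin (u x y)
        + (φ x y - (1/2) * (Dx u x y)^3 - Dx (Dx (Dx u)) x y)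
          * (Dy (Dx u) x y - Real.sin (u x y)) := by
  intro x y
  have hu0 : ContDiff ℝ ∞ fun p : ℝ × ℝ => u p.1 p.2 := hu.of_le (by simp)
  have hu1 : ContDiff ℝ ∞ fun p : ℝ × ℝ => Dx u p.1 p.2 := contDiff_Dx hu0
  have hu2 : ContDiff ℝ ∞ fun p : ℝ × ℝ => Dx (Dx u) p.1 p.2 := contDiff_Dx hu1
  have hu3 : ContDiff ℝ ∞ fun p : ℝ × ℝ => Dx (Dx (Dx u)) p.1 p.2 := contDiff_Dx hu2
  have huy : ContDiff ℝ ∞ fun p : ℝ × ℝ => Dy u p.1 p.2 := contDiff_Dy hu0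
  have hu12 : ContDiff ℝ ∞ fun p : ℝ × ℝ => Dy (Dx u) p.1 p.2 := contDiff_Dy hu1
  have hφs : ContDiff ℝ ∞ fun p : ℝ × ℝ => φ p.1 p.2 := by
    have : (fun p : ℝ × ℝ => φ p.1 p.2)
        = fun p : ℝ × ℝ => Dx (Dx (Dx u)) p.1 p.2 + (1/2) * (Dx u p.1 p.2)^3 := by
      funext p; exact hφ p.1 p.2
    rw [this]
    exact hu3.add (contDiff_const.mul (hu1.pow 3))
  -- HasDerivAt facts in the y-direction (at fixed x, point y)
  have hφy := hasDerivAt_Dy hφs x y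
  have hu1y := hasDerivAt_Dy hu1 x y
  have hu2y := hasDerivAt_Dy hu2 x y
  -- HasDerivAt facts in the x-direction (at fixed y, point x)
  have hφx := hasDerivAt_Dx hφs x y
  have hux := hasDerivAt_Dx hu0 x y
  have hu1x := hasDerivAt_Dx hu1 x y
  have hu2x := hasDerivAt_Dx hu2 x y
  have huyx := hasDerivAt_Dx huy x y
  have hu12x := hasDerivAt_Dx hu12 x y
  -- compute Dy M
  have hMy : Dy M x y
      = ((1/2) * Dy φ x y * Dx u x y + (1/2) * φ x y * Dy (Dx u) x y)
        - (1/8) * (4 * Dx u x y ^ 3 * Dy (Dx u) x y)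
        + (1/2) * (2 * Dx (Dx u) x y ^ 1 * Dy (Dx (Dx u)) x y) := by
    have hfun : (fun t => M x t)
        = fun t => (1/2) * φ x t * Dx u x t - (1/8) * (Dx u x t)^4
            + (1/2) * (Dx (Dx u) x t)^2 := funext (hM x)
    have hD : HasDerivAt (fun t => M x t)
        (((1/2) * Dy φ x y * Dx u x y + (1/2) * φ x y * Dy (Dx u) x y)
          - (1/8) * (4 * Dx u x y ^ 3 * Dy (Dx u) x y)
          + (1/2) * (2 * Dx (Dx u) x y ^ 1 * Dy (Dx (Dx u)) x y)) y := by
      rw [hfun]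
      exact (((hφy.const_mul (1/2)).mul hu1y).sub ((hu1y.pow 4).const_mul (1/8))).add
        ((hu2y.pow 2).const_mul (1/2))
    exact hD.deriv
  -- compute Dx N
  have hNx : Dx N x y
      = ((1/2) * Dx φ x y * Dy u x y + (1/2) * φ x y * Dx (Dy u) x y)
        - (((1/2) * (2 * Dx u x y ^ 1 * Dx (Dx u) x y)) * Real.cos (u x y)
            + (1/2) * (Dx u x y)^2 * (-Real.sin (u x y) * Dx u x y))
        - (Dx (Dx (Dx u)) x y * (Dy (Dx u) x y - Real.sin (u x y))
            + Dx (Dx u) x y * (Dx (Dy (Dx u)) x y - Real.cos (u x y) * Dx u x y)) := by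
    have hfun : (fun s => N s y)
        = fun s => (1/2) * φ s y * Dy u s y
            - (1/2) * (Dx u s y)^2 * Real.cos (u s y)
            - Dx (Dx u) s y * (Dy (Dx u) s y - Real.sin (u s y)) :=
      funext fun s => hN s y
    have hD : HasDerivAt (fun s => N s y)
        (((1/2) * Dx φ x y * Dy u x y + (1/2) * φ x y * Dx (Dy u) x y)
          - (((1/2) * (2 * Dx u x y ^ 1 * Dx (Dx u) x y)) * Real.cos (u x y)
              + (1/2) * (Dx u x y)^2 * (-Real.sin (u x y) * Dx u x y))
          - (Dx (Dx (Dx u)) x y * (Dy (Dx u) x y - Real.sin (u x y))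
              + Dx (Dx u) x y * (Dx (Dy (Dx u)) x y - Real.cos (u x y) * Dx u x y))) x := by
      rw [hfun]
      exact ((((hφx.const_mul (1/2)).mul huyx).sub
        (((hu1x.pow 2).const_mul (1/2)).mul hux.cos)).sub
        (hu2x.mul (hu12x.sub hux.sin)))
    exact hD.deriv
  have hc1 : Dx (Dy u) x y = Dy (Dx u) x y := (Dy_Dx_comm hu0 x y).symm
  have hc2 : Dx (Dy (Dx u)) x y = Dy (Dx (Dx u)) x y := (Dy_Dx_comm hu1 x y).symm
  rw [hMy, hNx, hc1, hc2, hφ x y]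
  ring
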